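/- arXiv:1806.06580 — 4 statements merged into one kernel-verified Lean document; each statement's English description precedes it below -/
import Mathlib

section
/- Let n > 0, k ≥ 1, 0 < ε* < 1, 0 < φ < 1, and suppose f̃, ñ, f̂, f_i are nonnegative reals satisfying: (f_i/p)(1-ε*) < f̃ < (f_i/p)(1+ε*), (n/p)(1-ε*) < ñ < (n/p)(1+ε*), and f̃ ≤ f̂ ≤ f̃ + ñ/k, for some p ≥ 1. If f_i > φ·n, then f̂ > φ·ñ·(1-ε*)/(1+ε*). -/
theorem stmt_6 (n : ℝ) (hn : 0 < n) (k : ℕ) (hk : 1 ≤ k) (εstar φ : ℝ)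
    (hε0 : 0 < εstar) (hε1 : εstar < 1) (hφ0 : 0 < φ) (hφ1 : φ < 1)
    (p : ℕ) (hp : 1 ≤ p) (ftilde ntilde fhat fi : ℝ)
    (hftilde0 : 0 ≤ ftilde) (hntilde0 : 0 ≤ ntilde) (hfhat0 : 0 ≤ fhat) (hfi0 : 0 ≤ fi)
    (h1 : (fi / p) * (1 - εstar) < ftilde) (h2 : ftilde < (fi / p) * (1 + εstar))
    (h3 : (n / p) * (1 - εstar) < ntilde) (h4 : ntilde < (n / p) * (1 + εstar))
    (h5 : ftilde ≤ fhat) (h6 : fhat ≤ ftilde + ntilde / k)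
    (hfreq : fi > φ * n) :
    fhat > φ * ntilde * (1 - εstar) / (1 + εstar) := by
  have hp0 : (0:ℝ) < p := by exact_mod_cast hp
  have h1e : (0:ℝ) < 1 + εstar := by linarith
  rw [gt_iff_lt, div_lt_iff₀ h1e]
  have key : φ * ntilde * (1 - εstar) < φ * ((n / p) * (1 + εstar)) * (1 - εstar) := by
    have := mul_lt_mul_of_pos_left h4 hφ0
    nlinarith
  have key2 : φ * ((n / p) * (1 + εstar)) * (1 - εstar) < fhat * (1 + εstar) := by
    have hfi : φ * (n / p) * (1 - εstar) < fhat := by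
      have : φ * (n / p) < fi / p := by
        rw [mul_div_assoc']
        exact (div_lt_div_iff_of_pos_right hp0).mpr hfreq
      nlinarith
    nlinarith
  linarith
end

section
/- Let n > 0, k ≥ 1, 0 < ε* < 1, 0 < φ < 1, p ≥ 1, and suppose f̃, ñ, f̂, f_i are nonnegative reals satisfying: (f_i/p)(1-ε*) < f̃ < (f_i/p)(1+ε*), (n/p)(1-ε*) < ñ < (n/p)(1+ε*), and f̃ ≤ f̂ ≤ f̃ + ñ/k. If f̂ > φ·ñ·(1-ε*)/(1+ε*), then f_i > (φ - ε)·n, where ε = 4ε*φ/(1+ε*)² + (1-ε*)/(k(1+ε*)). -/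
theorem stmt_7 (n : ℝ) (hn : 0 < n) (k : ℕ) (hk : 1 ≤ k) (εstar φ : ℝ)
    (hε0 : 0 < εstar) (hε1 : εstar < 1) (hφ0 : 0 < φ) (hφ1 : φ < 1)
    (p : ℕ) (hp : 1 ≤ p) (ftilde ntilde fhat fi : ℝ)
    (hftilde0 : 0 ≤ ftilde) (hntilde0 : 0 ≤ ntilde) (hfhat0 : 0 ≤ fhat) (hfi0 : 0 ≤ fi)
    (h1 : (fi / p) * (1 - εstar) < ftilde) (h2 : ftilde < (fi / p) * (1 + εstar))
    (h3 : (n / p) * (1 - εstar) < ntilde) (h4 : ntilde < (n / p) * (1 + εstar))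
    (h5 : ftilde ≤ fhat) (h6 : fhat ≤ ftilde + ntilde / k)
    (hsel : fhat > φ * ntilde * (1 - εstar) / (1 + εstar)) :
    fi > (φ - (4 * εstar * φ / (1 + εstar) ^ 2 + (1 - εstar) / (k * (1 + εstar)))) * n := by
  have hkR : (1:ℝ) ≤ (k:ℝ) := by exact_mod_cast hk
  have hkpos : (0:ℝ) < (k:ℝ) := lt_of_lt_of_le one_pos hkR
  have hpR : (1:ℝ) ≤ (p:ℝ) := by exact_mod_cast hp
  have hppos : (0:ℝ) < (p:ℝ) := lt_of_lt_of_le one_pos hpR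
  have h1e : (0:ℝ) < 1 + εstar := by linarith
  have h1e' : (0:ℝ) < 1 - εstar := by linarith
  -- fi > 0
  have hfi : 0 < fi := by
    by_contra h
    push_neg at h
    have : fi = 0 := le_antisymm h hfi0
    rw [this] at h2
    simp at h2
    linarith
  obtain ⟨c, hc⟩ : ∃ c : ℝ, c = φ * (1 - εstar) / (1 + εstar) - 1 / k := ⟨_, rfl⟩
  -- identity: φ - ε = (1-ε*)/(1+ε*) * c
  have hid : φ - (4 * εstar * φ / (1 + εstar) ^ 2 + (1 - εstar) / (k * (1 + εstar)))
      = (1 - εstar) / (1 + εstar) * c := by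
    rw [hc]
    field_simp
    ring
  rw [hid]
  -- ftilde > ntilde * c
  have hft : ftilde > ntilde * c := by
    have : fhat - ntilde / k ≤ ftilde := by linarith
    have h7 : φ * ntilde * (1 - εstar) / (1 + εstar) - ntilde / k < ftilde := by linarith
    calc ntilde * c = φ * ntilde * (1 - εstar) / (1 + εstar) - ntilde * (1/k) := by
          rw [hc]; ring
      _ ≤ φ * ntilde * (1 - εstar) / (1 + εstar) - ntilde / k := by
          rw [mul_one_div]
      _ < ftilde := h7
  rcases le_or_gt c 0 with hc0 | hc0
  · have hle : (1 - εstar) / (1 + εstar) * c ≤ 0 :=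
      mul_nonpos_of_nonneg_of_nonpos (div_pos h1e' h1e).le hc0
    have : (1 - εstar) / (1 + εstar) * c * n ≤ 0 :=
      mul_nonpos_of_nonpos_of_nonneg hle hn.le
    linarith
  · have hnc : ntilde * c > (n / p) * (1 - εstar) * c :=
      mul_lt_mul_of_pos_right h3 hc0
    have hchain : (fi / p) * (1 + εstar) > (n / p) * (1 - εstar) * c := by linarith
    have key : fi * (1 + εstar) > n * (1 - εstar) * c := by
      have h := mul_lt_mul_of_pos_right hchain hppos
      have e1 : fi / p * (1 + εstar) * p = fi * (1 + εstar) := by field_simp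
      have e2 : n / p * (1 - εstar) * c * p = n * (1 - εstar) * c := by field_simp
      rw [e1, e2] at h
      exact h
    have e3 : (1 - εstar) / (1 + εstar) * c * n = n * (1 - εstar) * c / (1 + εstar) := by
      field_simp
    rw [gt_iff_lt, e3, div_lt_iff₀ h1e]
    exact key
end

section
/- Let 0 < ε* < 1, p ≥ 1, n > 0, k ≥ 1, f ≥ 0, and let p̃, f̃, ñ, f̂ be positive reals satisfying p/(1+ε*) < p̃ < p/(1-ε*), (f/p)(1-ε*) < f̃ < (f/p)(1+ε*), (n/p)(1-ε*) < ñ < (n/p)(1+ε*), and f̃ ≤ f̂ ≤ f̃ + ñ/k. Then ((1-ε*)/(1+ε*))·f < f̂·p̃ < ((1+ε*)/(1-ε*))·(f + n/k). -/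
theorem stmt_9 (εstar : ℝ) (hε0 : 0 < εstar) (hε1 : εstar < 1)
    (p : ℕ) (hp : 1 ≤ p) (n : ℝ) (hn : 0 < n) (k : ℕ) (hk : 1 ≤ k)
    (f : ℝ) (hf : 0 ≤ f) (ptilde ftilde ntilde fhat : ℝ)
    (hptilde : 0 < ptilde) (hftilde : 0 < ftilde) (hntilde : 0 < ntilde) (hfhat : 0 < fhat)
    (hp1 : (p : ℝ) / (1 + εstar) < ptilde) (hp2 : ptilde < (p : ℝ) / (1 - εstar))
    (hf1 : (f / p) * (1 - εstar) < ftilde) (hf2 : ftilde < (f / p) * (1 + εstar))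
    (hn1 : (n / p) * (1 - εstar) < ntilde) (hn2 : ntilde < (n / p) * (1 + εstar))
    (hss1 : ftilde ≤ fhat) (hss2 : fhat ≤ ftilde + ntilde / k) :
    ((1 - εstar) / (1 + εstar)) * f < fhat * ptilde ∧
      fhat * ptilde < ((1 + εstar) / (1 - εstar)) * (f + n / k) := by
  have hpR : (0:ℝ) < p := by exact_mod_cast Nat.lt_of_lt_of_le Nat.zero_lt_one hp
  have hkR : (0:ℝ) < k := by exact_mod_cast Nat.lt_of_lt_of_le Nat.zero_lt_one hk
  have h1e : (0:ℝ) < 1 + εstar := by linarith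
  have h2e : (0:ℝ) < 1 - εstar := by linarith
  constructor
  · have hA : (f / p) * (1 - εstar) < fhat := lt_of_lt_of_le hf1 hss1
    have hA0 : 0 ≤ (f / p) * (1 - εstar) :=
      mul_nonneg (div_nonneg hf hpR.le) h2e.le
    have hB0 : 0 ≤ (p : ℝ) / (1 + εstar) := (div_pos hpR h1e).le
    have key : (f / p) * (1 - εstar) * ((p : ℝ) / (1 + εstar)) < fhat * ptilde :=
      mul_lt_mul'' hA hp1 hA0 hB0
    calc ((1 - εstar) / (1 + εstar)) * f
        = (f / p) * (1 - εstar) * ((p : ℝ) / (1 + εstar)) := by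
          field_simp
      _ < fhat * ptilde := key
  · have hU : fhat < (f / p) * (1 + εstar) + (n / p) * (1 + εstar) / k := by
      have h1 : ntilde / (k : ℝ) < (n / p) * (1 + εstar) / k := by gcongr
      linarith
    have key : fhat * ptilde <
        ((f / p) * (1 + εstar) + (n / p) * (1 + εstar) / k) * ((p : ℝ) / (1 - εstar)) :=
      mul_lt_mul'' hU hp2 hfhat.le hptilde.le
    calc fhat * ptilde
        < ((f / p) * (1 + εstar) + (n / p) * (1 + εstar) / k) * ((p : ℝ) / (1 - εstar)) := key
      _ = ((1 + εstar) / (1 - εstar)) * (f + n / k) := by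
          field_simp
end

section
/- Let S₁, S₂ be functions from a finite universe U to ℕ summarizing multisets N₁, N₂ : U → ℕ, each with minimum values m₁, m₂ (equal to 0 if the summary has fewer than k items), satisfying for i=1,2 and all e: S_i(e) - m_i ≤ N_i(e) ≤ S_i(e) for e in the support of S_i, and N_i(e) ≤ m_i otherwise. Define the combined function S(e) = S₁(e) + S₂(e) if e is in both supports, S₁(e) + m₂ if only in supp(S₁), and S₂(e) + m₁ if only in supp(S₂). Then for every e ∈ supp(S): S(e) - (m₁+m₂) ≤ N₁(e) + N₂(e) ≤ S(e), and for e ∉ supp(S₁) ∪ supp(S₂): N₁(e)+N₂(e) ≤ m₁+m₂. -/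
theorem stmt_14 {U : Type*} [Fintype U] [DecidableEq U]
    (S₁ S₂ N₁ N₂ : U → ℕ) (m₁ m₂ : ℕ)
    (h1 : ∀ e, (S₁ e ≠ 0 → S₁ e - m₁ ≤ N₁ e ∧ N₁ e ≤ S₁ e) ∧ (S₁ e = 0 → N₁ e ≤ m₁))
    (h2 : ∀ e, (S₂ e ≠ 0 → S₂ e - m₂ ≤ N₂ e ∧ N₂ e ≤ S₂ e) ∧ (S₂ e = 0 → N₂ e ≤ m₂)) :
    let S : U → ℕ := fun e =>
      if S₁ e ≠ 0 then (if S₂ e ≠ 0 then S₁ e + S₂ e else S₁ e + m₂)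
      else (if S₂ e ≠ 0 then S₂ e + m₁ else 0)
    (∀ e, S e ≠ 0 → S e - (m₁ + m₂) ≤ N₁ e + N₂ e ∧ N₁ e + N₂ e ≤ S e) ∧
      (∀ e, S₁ e = 0 → S₂ e = 0 → N₁ e + N₂ e ≤ m₁ + m₂) := by
  intro S
  constructor
  · intro e hS
    obtain ⟨h1a, h1b⟩ := h1 e
    obtain ⟨h2a, h2b⟩ := h2 e
    simp only [S] at hS ⊢
    by_cases e1 : S₁ e = 0 <;> by_cases e2 : S₂ e = 0 <;>
      simp [e1, e2] at hS ⊢ <;> omega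
  · intro e e1 e2
    obtain ⟨_, h1b⟩ := h1 e
    obtain ⟨_, h2b⟩ := h2 e
    omega
end
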